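/- Let Σ be a finite simplicial complex of dimension n ≥ 0 such that for every simplex σ ∈ Σ (including the empty simplex) with card(σ) ≤ n − 1, the link Lk_Σ σ is a connected complex, in the sense that any two vertices of Lk_Σ σ are joined by a path of edges in Lk_Σ σ. Then Σ is pure: every maximal simplex of Σ has dimension n. -/
import Mathlib


variable {V : Type*}

/-- An augmented abstract simplicial complex: a collection of finite sets
closed under taking subsets. -/
def IsComplex (K : Set (Finset V)) : Prop :=
  ∀ σ ∈ K, ∀ τ ⊆ σ, τ ∈ K

/-- The vertex set of a complex. -/
def vertexSet (K : Set (Finset V)) : Set V := {v | ∃ σ ∈ K, v ∈ σ}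

/-- The join of two complexes. -/
def joinC [DecidableEq V] (K L : Set (Finset V)) : Set (Finset V) :=
  {σ | ∃ σ₁ ∈ K, ∃ σ₂ ∈ L, σ = σ₁ ∪ σ₂}

/-- The link of a simplex σ in a complex K. -/
def linkC [DecidableEq V] (K : Set (Finset V)) (σ : Finset V) : Set (Finset V) :=
  {τ ∈ K | σ ∩ τ = ∅ ∧ σ ∪ τ ∈ K}

/-- A complex is connected (in the graph sense): its vertex set is nonempty
and any two vertices are joined by a path of edges. -/
def ConnectedComplex [DecidableEq V] (K : Set (Finset V)) : Prop :=
  (vertexSet K).Nonempty ∧ ∀ u ∈ vertexSet K, ∀ w ∈ vertexSet K,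
    ∃ (m : ℕ) (c : ℕ → V), c 0 = u ∧ c m = w ∧
      ∀ i < m, ({c i, c (i + 1)} : Finset V) ∈ K

lemma singl_union [DecidableEq V] (a : V) (s : Finset V) :
    ({a} : Finset V) ∪ s = insert a s := by
  ext x; simp

lemma linkC_empty [DecidableEq V] (K : Set (Finset V)) : linkC K ∅ = K := by
  ext τ; simp [linkC]

lemma linkC_singleton_linkC [DecidableEq V] (K : Set (Finset V)) (hK : IsComplex K)
    (v : V) (τ : Finset V) (hτ : τ ∈ linkC K {v}) :
    linkC (linkC K {v}) τ = linkC K ({v} ∪ τ) := by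
  obtain ⟨hτK, hτi, hτu⟩ := hτ
  ext ρ
  simp only [linkC, Set.mem_setOf_eq]
  constructor
  · rintro ⟨⟨hρK, hρi, hρu⟩, hti, ⟨_, _, htu⟩⟩
    refine ⟨hρK, ?_, by rw [Finset.union_assoc]; exact htu⟩
    rw [Finset.union_inter_distrib_right, hρi, hti, Finset.union_empty]
  · rintro ⟨hρK, hi, hu⟩
    rw [Finset.union_assoc] at hu
    have hi' : {v} ∩ ρ = ∅ ∧ τ ∩ ρ = ∅ := by
      constructor <;>
        · rw [Finset.eq_empty_iff_forall_notMem] at hi ⊢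
          intro x hx
          refine hi x ?_
          simp only [Finset.mem_inter, Finset.mem_union] at hx ⊢
          tauto
    refine ⟨⟨hρK, hi'.1, hK _ hu _ (by
        intro x hx; simp only [Finset.mem_union] at hx ⊢; tauto)⟩,
      hi'.2, hK _ hu _ (by
        intro x hx; simp only [Finset.mem_union] at hx ⊢; tauto),
      by rw [Finset.inter_union_distrib_left, hτi, hi'.1, Finset.union_empty], hu⟩

lemma extend_lemma [DecidableEq V] : ∀ (n : ℕ) (K : Set (Finset V)), IsComplex K →
    (∃ σ ∈ K, σ.card = n + 1) → (∀ σ ∈ K, σ.card ≤ n + 1) →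
    (∀ σ ∈ K, (σ.card : ℤ) ≤ (n : ℤ) - 1 → ConnectedComplex (linkC K σ)) →
    ∀ σ ∈ K, ∃ τ ∈ K, σ ⊆ τ ∧ τ.card = n + 1 := by
  intro n
  induction n with
  | zero =>
    intro K hK hdim₁ hdim₂ _ σ hσ
    obtain ⟨ρ, hρ, hρc⟩ := hdim₁
    rcases Nat.lt_or_ge σ.card 1 with h | h
    · exact ⟨ρ, hρ, by simp [Finset.card_eq_zero.mp (Nat.lt_one_iff.mp h)], hρc⟩
    · exact ⟨σ, hσ, subset_rfl, le_antisymm (hdim₂ σ hσ) h⟩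
  | succ m ih =>
    intro K hK hdim₁ hdim₂ hconn
    -- key: for a vertex v in a top simplex, the link of v satisfies the hypotheses
    have key : ∀ v : V, (∃ ρ ∈ K, v ∈ ρ ∧ ρ.card = m + 2) →
        ∀ σ ∈ linkC K {v}, ∃ τ ∈ linkC K {v}, σ ⊆ τ ∧ τ.card = m + 1 := by
      rintro v ⟨ρ, hρ, hvρ, hρc⟩
      have hLcomp : IsComplex (linkC K {v}) := by
        rintro τ ⟨hτK, hτi, hτu⟩ τ' hτ'
        refine ⟨hK τ hτK τ' hτ', ?_, hK _ hτu _ (Finset.union_subset_union_right hτ')⟩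
        have : {v} ∩ τ' ⊆ {v} ∩ τ := Finset.inter_subset_inter subset_rfl hτ'
        rw [hτi] at this
        exact Finset.subset_empty.mp this
      have hvmem : ∀ τ ∈ linkC K {v}, v ∉ τ := by
        rintro τ ⟨_, hτi, _⟩ hv
        have : v ∈ ({v} : Finset V) ∩ τ := Finset.mem_inter.mpr ⟨Finset.mem_singleton_self v, hv⟩
        rw [hτi] at this
        exact absurd this (Finset.notMem_empty v)
      have hcard : ∀ τ ∈ linkC K {v}, ({v} ∪ τ).card = τ.card + 1 := by
        intro τ hτ
        rw [singl_union, Finset.card_insert_of_notMem (hvmem τ hτ)]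
      refine ih (linkC K {v}) hLcomp ⟨ρ.erase v, ?_, ?_⟩ ?_ ?_
      · refine ⟨hK ρ hρ _ (Finset.erase_subset v ρ), ?_, ?_⟩
        · rw [Finset.singleton_inter_of_notMem (Finset.notMem_erase v ρ)]
        · rwa [singl_union, Finset.insert_erase hvρ]
      · rw [Finset.card_erase_of_mem hvρ, hρc]
        omega
      · intro τ hτ
        have := hcard τ hτ
        have h2 := hdim₂ _ hτ.2.2
        rw [this] at h2
        omega
      · intro τ hτ hτc
        rw [linkC_singleton_linkC K hK v τ hτ]
        refine hconn _ hτ.2.2 ?_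
        rw [hcard τ hτ]
        push_cast
        omega
    -- every vertex lies in a top simplex
    obtain ⟨ρ₀, hρ₀, hρ₀c⟩ := hdim₁
    have hρ₀ne : ρ₀.Nonempty := Finset.card_pos.mp (by omega)
    obtain ⟨u₀, hu₀⟩ := hρ₀ne
    have hempty : (∅ : Finset V) ∈ K := hK ρ₀ hρ₀ ∅ (Finset.empty_subset ρ₀)
    have hKconn : ConnectedComplex K := by
      have := hconn ∅ hempty (by simp)
      rwa [linkC_empty] at this
    have hvert : ∀ w ∈ vertexSet K, ∃ ρ ∈ K, w ∈ ρ ∧ ρ.card = m + 2 := by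
      intro w hw
      obtain ⟨M, c, hc0, hcM, hce⟩ := hKconn.2 u₀ ⟨ρ₀, hρ₀, hu₀⟩ w hw
      have : ∀ i ≤ M, ∃ ρ ∈ K, c i ∈ ρ ∧ ρ.card = m + 2 := by
        intro i
        induction i with
        | zero => intro _; exact ⟨ρ₀, hρ₀, hc0 ▸ hu₀, hρ₀c⟩
        | succ j ihj =>
          intro hjM
          obtain ⟨ρ', hρ', hcj, hρ'c⟩ := ihj (by omega)
          by_cases hne : c (j + 1) = c j
          · exact ⟨ρ', hρ', hne ▸ hcj, hρ'c⟩
          · have hedge := hce j (by omega)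
            have hlk : ({c (j + 1)} : Finset V) ∈ linkC K {c j} := by
              refine ⟨hK _ hedge _ (by intro x hx; simp at hx; simp [hx]), ?_, ?_⟩
              · rw [Finset.singleton_inter_of_notMem (by simp [Ne.symm hne])]
              · rw [singl_union]; exact hedge
            obtain ⟨τ, hτL, hsub, hτc⟩ := key (c j) ⟨ρ', hρ', hcj, hρ'c⟩ _ hlk
            refine ⟨{c j} ∪ τ, hτL.2.2, ?_, ?_⟩
            · exact Finset.mem_union_right _ (hsub (Finset.mem_singleton_self _))
            · rw [singl_union, Finset.card_insert_of_notMem, hτc]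
              intro hv
              have : c j ∈ ({c j} : Finset V) ∩ τ :=
                Finset.mem_inter.mpr ⟨Finset.mem_singleton_self _, hv⟩
              rw [hτL.2.1] at this
              exact absurd this (Finset.notMem_empty _)
      exact hcM ▸ this M le_rfl
    -- main step
    intro σ hσ
    rcases Finset.eq_empty_or_nonempty σ with h | ⟨v, hv⟩
    · exact ⟨ρ₀, hρ₀, h ▸ Finset.empty_subset ρ₀, hρ₀c⟩
    · obtain ⟨ρ, hρ, hvρ, hρc⟩ := hvert v ⟨σ, hσ, hv⟩
      have hlk : σ.erase v ∈ linkC K {v} := by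
        refine ⟨hK σ hσ _ (Finset.erase_subset v σ), ?_, ?_⟩
        · rw [Finset.singleton_inter_of_notMem (Finset.notMem_erase v σ)]
        · rwa [singl_union, Finset.insert_erase hv]
      obtain ⟨τ, hτL, hsub, hτc⟩ := key v ⟨ρ, hρ, hvρ, hρc⟩ _ hlk
      refine ⟨{v} ∪ τ, hτL.2.2, ?_, ?_⟩
      · intro x hx
        rcases eq_or_ne x v with rfl | hxv
        · exact Finset.mem_union_left _ (Finset.mem_singleton_self _)
        · exact Finset.mem_union_right _ (hsub (Finset.mem_erase.mpr ⟨hxv, hx⟩))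
      · rw [singl_union, Finset.card_insert_of_notMem, hτc]
        intro hv'
        have : v ∈ ({v} : Finset V) ∩ τ :=
          Finset.mem_inter.mpr ⟨Finset.mem_singleton_self _, hv'⟩
        rw [hτL.2.1] at this
        exact absurd this (Finset.notMem_empty _)

/-- If Σ is a finite complex of dimension n ≥ 0 such that Lk_Σ σ is
connected for every σ ∈ Σ with card σ ≤ n − 1, then Σ is pure: every
maximal simplex has dimension n. -/
theorem pure_of_links_connected [DecidableEq V] (K : Set (Finset V)) (n : ℕ)
    (hK : IsComplex K) (hfin : K.Finite)
    (hdim₁ : ∃ σ ∈ K, σ.card = n + 1)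
    (hdim₂ : ∀ σ ∈ K, σ.card ≤ n + 1)
    (hconn : ∀ σ ∈ K, (σ.card : ℤ) ≤ (n : ℤ) - 1 →
      ConnectedComplex (linkC K σ))
    (σ : Finset V) (hσ : σ ∈ K) (hmax : ∀ τ ∈ K, σ ⊆ τ → σ = τ) :
    σ.card = n + 1 := by
  obtain ⟨τ, hτ, hsub, hc⟩ := extend_lemma n K hK hdim₁ hdim₂ hconn σ hσ
  rw [hmax τ hτ hsub]; exact hc
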